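/- arXiv:2308.16378 — 4 statements merged into one kernel-verified Lean document; each statement's English description precedes it below -/
import Mathlib

section
/- If R is a real random variable with density f_R, then the average mixing matrix M̂_R := E[M(R)] = ∫ M(t) f_R(t) dt satisfies M̂_R = Σ_r E_r ∘ E_r + 2 Σ_{s<r} (E_r ∘ E_s) · E[cos((θ_r - θ_s)R)]. -/
/-!
Since the `E r` form a complete family of orthogonal idempotents, `f ↦ ∑ r, f r • E r` is an
algebra homomorphism out of `ℂ^d`; it is continuous, so it commutes with the exponential and
`U(t) = ∑ r, exp(i t θ r) • E r`. As the `E r` are real,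
`M(t) = ∑ r s, exp(i t (θ r - θ s)) • E r ⊙ E s`, and averaging turns each exponential into
the characteristic function `φ(θ r - θ s)` of `R`.
The diagonal has `φ 0 = 1`, and the terms `(r, s)`, `(s, r)` pair up because
`φ (-a) = conj (φ a)`, leaving `2 Re φ a = 2 E[cos (a R)]`.
-/

open Matrix MeasureTheory
open scoped Matrix

namespace CompleteOrthogonalIdempotents

section AlgHom

variable {R ι 𝔸 : Type*} [CommSemiring R] [Semiring 𝔸] [Algebra R 𝔸] [Fintype ι] {E : ι → 𝔸}

def sumSmulAlgHom (he : CompleteOrthogonalIdempotents E) : (ι → R) →ₐ[R] 𝔸 where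
  toFun f := ∑ i, f i • E i
  map_one' := by simp [he.complete]
  map_mul' f g := by
    classical
    simp only [Pi.mul_apply, Finset.sum_mul_sum, smul_mul_smul_comm, he.mul_eq, smul_ite,
      smul_zero, Finset.sum_ite_eq, Finset.mem_univ, if_true]
  map_zero' := by simp
  map_add' f g := by simp [add_smul, Finset.sum_add_distrib]
  commutes' a := by simp [Algebra.algebraMap_eq_smul_one, ← Finset.smul_sum, he.complete]

@[simp]
lemma sumSmulAlgHom_apply (he : CompleteOrthogonalIdempotents E) (f : ι → R) :
    he.sumSmulAlgHom f = ∑ i, f i • E i := rfl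

end AlgHom

theorem exp_sum_smul {ι 𝔸 : Type*} [Fintype ι] [NormedRing 𝔸] [NormedAlgebra ℂ 𝔸]
    {E : ι → 𝔸} (he : CompleteOrthogonalIdempotents E) (c : ι → ℂ) :
    NormedSpace.exp (∑ i, c i • E i) = ∑ i, Complex.exp (c i) • E i := by
  have hcont : Continuous (he.sumSmulAlgHom (R := ℂ)) :=
    (he.sumSmulAlgHom (R := ℂ)).toLinearMap.continuous_of_finiteDimensional
  have := NormedSpace.map_exp_of_mem_ball (𝕂 := ℂ) he.sumSmulAlgHom hcont c
    ((NormedSpace.expSeries_radius_eq_top ℂ (ι → ℂ)).symm ▸ edist_lt_top _ _)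
  simpa [Pi.exp_def, Complex.exp_eq_exp_ℂ] using this.symm

end CompleteOrthogonalIdempotents

lemma Finset.sum_sum_eq_sum_diag_add_sum_lt {ι M : Type*} [Fintype ι] [LinearOrder ι]
    [AddCommMonoid M] (F : ι → ι → M) :
    ∑ r, ∑ s, F r s = ∑ r, F r r + ∑ r, ∑ s ∈ Finset.univ.filter (· < r), (F r s + F s r) := by
  have htri : ∀ r s, F r s = (if s < r then F r s else 0) + (if r = s then F r s else 0) +
      (if r < s then F r s else 0) := by
    intro r s
    rcases lt_trichotomy r s with h | rfl | h
    · simp [h, h.not_gt, h.ne]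
    · simp
    · simp [h, h.not_gt, h.ne']
  simp_rw [Finset.sum_add_distrib, Finset.sum_filter]
  conv_lhs => rw [Finset.sum_congr rfl fun r _ => Finset.sum_congr rfl fun s _ => htri r s]
  simp only [Finset.sum_add_distrib, Finset.sum_ite_eq, Finset.mem_univ, if_true]
  rw [Finset.sum_comm (f := fun r s => if r < s then F r s else 0)]
  abel

lemma Matrix.sum_smul_hadamard_sum_smul {ι m n α : Type*} [Fintype ι] [CommSemiring α]
    (a b : ι → α) (X Y : ι → Matrix m n α) :
    (∑ r, a r • X r) ⊙ (∑ s, b s • Y s) = ∑ r, ∑ s, (a r * b s) • (X r ⊙ Y s) := by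
  ext i j
  simp [Matrix.sum_apply, Finset.sum_mul_sum, mul_mul_mul_comm]

lemma Matrix.map_conj_sum_smul {ι m n : Type*} [Fintype ι] (c : ι → ℂ) (E : ι → Matrix m n ℂ)
    (hreal : ∀ r, (E r).map (starRingEnd ℂ) = E r) :
    (∑ r, c r • E r).map (starRingEnd ℂ) = ∑ r, starRingEnd ℂ (c r) • E r := by
  ext i j
  have hE r : starRingEnd ℂ (E r i j) = E r i j := congrFun₂ (hreal r) i j
  simp [Matrix.sum_apply, hE]

lemma integrable_cexp_mul_I (μ : Measure ℝ) [IsFiniteMeasure μ] (a : ℝ) :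
    Integrable (fun t : ℝ => Complex.exp (a * t * Complex.I)) μ :=
  (integrable_const (1 : ℝ)).mono' (by fun_prop)
    (ae_of_all _ fun t => by simp [← Complex.ofReal_mul, Complex.norm_exp_ofReal_mul_I])

lemma charFun_re_eq_integral_cos (μ : Measure ℝ) [IsFiniteMeasure μ] (a : ℝ) :
    (charFun μ a).re = ∫ t, Real.cos (a * t) ∂μ := by
  rw [charFun_apply_real]
  exact (integral_re (integrable_cexp_mul_I μ a)).symm.trans
    (integral_congr_ae (ae_of_all _ fun t => by
      simp [← Complex.ofReal_mul, Complex.exp_ofReal_mul_I_re]))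

lemma charFun_add_charFun_neg (μ : Measure ℝ) [IsFiniteMeasure μ] (a : ℝ) :
    charFun μ a + charFun μ (-a) = ((2 * ∫ t, Real.cos (a * t) ∂μ : ℝ) : ℂ) := by
  rw [charFun_neg, Complex.add_conj, charFun_re_eq_integral_cos]

-- `NormedSpace.exp` only depends on the topology of the matrices; any Banach-algebra norm
-- inducing it lets us use the general lemma `exp_sum_smul`.
attribute [local instance] Matrix.linftyOpNormedRing Matrix.linftyOpNormedAlgebra

section MixingMatrix

variable {ι n : Type*} [Fintype ι] [Fintype n] [DecidableEq n] (θ : ι → ℝ)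
  {E : ι → Matrix n n ℂ}

lemma exp_hadamard_map_conj_eq_sum (he : CompleteOrthogonalIdempotents E)
    (hreal : ∀ r, (E r).map (starRingEnd ℂ) = E r) (t : ℝ) :
    NormedSpace.exp ((Complex.I * t) • ∑ r, (θ r : ℂ) • E r) ⊙
        (NormedSpace.exp ((Complex.I * t) • ∑ r, (θ r : ℂ) • E r)).map (starRingEnd ℂ) =
      ∑ r, ∑ s, Complex.exp (↑(θ r - θ s) * t * Complex.I) • (E r ⊙ E s) := by
  have hU : NormedSpace.exp ((Complex.I * t) • ∑ r, (θ r : ℂ) • E r) =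
      ∑ r, Complex.exp (Complex.I * t * θ r) • E r := by
    simp_rw [Finset.smul_sum, smul_smul]
    exact he.exp_sum_smul _
  rw [hU, Matrix.map_conj_sum_smul _ _ hreal, Matrix.sum_smul_hadamard_sum_smul]
  refine Finset.sum_congr rfl fun r _ => Finset.sum_congr rfl fun s _ => ?_
  rw [← Complex.exp_conj, ← Complex.exp_add]
  congr 2
  simp only [map_mul, Complex.conj_I, Complex.conj_ofReal]
  push_cast
  ring

lemma integral_exp_hadamard_map_conj_eq_sum_charFun (he : CompleteOrthogonalIdempotents E)
    (hreal : ∀ r, (E r).map (starRingEnd ℂ) = E r) (μ : Measure ℝ) [IsFiniteMeasure μ] :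
    Matrix.of (fun i j => ∫ t, (NormedSpace.exp ((Complex.I * t) • ∑ r, (θ r : ℂ) • E r) ⊙
        (NormedSpace.exp ((Complex.I * t) • ∑ r, (θ r : ℂ) • E r)).map (starRingEnd ℂ)) i j ∂μ) =
      ∑ r, ∑ s, charFun μ (θ r - θ s) • (E r ⊙ E s) := by
  ext i j
  simp only [Matrix.of_apply, exp_hadamard_map_conj_eq_sum θ he hreal, Matrix.sum_apply,
    Matrix.smul_apply, smul_eq_mul, charFun_apply_real]
  rw [integral_finsetSum _ fun r _ =>
    integrable_finsetSum _ fun s _ => (integrable_cexp_mul_I μ _).mul_const _]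
  refine Finset.sum_congr rfl fun r _ => ?_
  rw [integral_finsetSum _ fun s _ => (integrable_cexp_mul_I μ _).mul_const _]
  exact Finset.sum_congr rfl fun s _ => integral_mul_const _ _

end MixingMatrix

theorem averageMixingMatrix_formula_general {n d : ℕ}
    (A : Matrix (Fin n) (Fin n) ℂ)
    (θ : Fin d → ℝ) (E : Fin d → Matrix (Fin n) (Fin n) ℂ)
    (hA : A = ∑ r, ((θ r : ℂ)) • E r)
    (horth : ∀ r s, E r * E s = if r = s then E r else 0)
    (hsum : ∑ r, E r = 1)
    (hreal : ∀ r, (E r).map (starRingEnd ℂ) = E r)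
    (μ : Measure ℝ) [IsProbabilityMeasure μ] :
    (Matrix.of fun i j => ∫ t,
        ((NormedSpace.exp ((Complex.I * (t : ℂ)) • A)) ⊙
          ((NormedSpace.exp ((Complex.I * (t : ℂ)) • A)).map (starRingEnd ℂ))) i j ∂μ) =
      (∑ r, E r ⊙ E r) +
        ∑ r, ∑ s ∈ Finset.univ.filter (· < r),
          (((2 * ∫ t, Real.cos ((θ r - θ s) * t) ∂μ : ℝ) : ℂ)) • (E r ⊙ E s) := by
  subst hA
  have he : CompleteOrthogonalIdempotents E := ⟨OrthogonalIdempotents.iff_mul_eq.2 horth, hsum⟩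
  rw [integral_exp_hadamard_map_conj_eq_sum_charFun θ he hreal μ,
    Finset.sum_sum_eq_sum_diag_add_sum_lt]
  congr 1
  · simp
  · refine Finset.sum_congr rfl fun r _ => Finset.sum_congr rfl fun s _ => ?_
    rw [Matrix.hadamard_comm (E s), ← add_smul, ← charFun_add_charFun_neg, neg_sub]

/-- if `R` is a real random variable (modelled by its distribution, a
probability measure `μ` on `ℝ`), then the average mixing matrix
`M̂_R = E[M(R)] = ∫ M(t) ∂μ` satisfies
`M̂_R = ∑ r, E r ∘ E r + 2 ∑_{s<r} (E r ∘ E s) · E[cos ((θ r - θ s) R)]`. -/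
theorem averageMixingMatrix_formula {n d : ℕ}
    (A : Matrix (Fin n) (Fin n) ℂ)
    (θ : Fin d → ℝ) (E : Fin d → Matrix (Fin n) (Fin n) ℂ)
    (hθ : Function.Injective θ)
    (hA : A = ∑ r, ((θ r : ℂ)) • E r)
    (horth : ∀ r s, E r * E s = if r = s then E r else 0)
    (hsum : ∑ r, E r = 1)
    (hreal : ∀ r, (E r).map (starRingEnd ℂ) = E r)
    (μ : Measure ℝ) [IsProbabilityMeasure μ] :
    (Matrix.of fun i j => ∫ t,
        ((NormedSpace.exp ((Complex.I * (t : ℂ)) • A)) ⊙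
          ((NormedSpace.exp ((Complex.I * (t : ℂ)) • A)).map (starRingEnd ℂ))) i j ∂μ) =
      (∑ r, E r ⊙ E r) +
        ∑ r, ∑ s ∈ Finset.univ.filter (· < r),
          (((2 * ∫ t, Real.cos ((θ r - θ s) * t) ∂μ : ℝ) : ℂ)) • (E r ⊙ E s) :=
  averageMixingMatrix_formula_general A θ E hA horth hsum hreal μ
end

section
/- If a graph G on n vertices admits uniform average mixing under some distribution R, i.e., M̂_R = (1/n)J, then (1/n) Σ_r m_r² ≤ tr(M̂) ≤ (n+1)/2, where m_r are the eigenvalue multiplicities of the adjacency matrix of G. -/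
open Matrix MeasureTheory
open scoped Matrix

/-- The average mixing matrix under a sampling distribution `μ`, expressed via the
(real) spectral idempotents `E r` with eigenvalues `θ r`. -/
noncomputable def ammR {n d : ℕ} (θ : Fin d → ℝ)
    (E : Fin d → Matrix (Fin n) (Fin n) ℝ) (μ : Measure ℝ) : Matrix (Fin n) (Fin n) ℝ :=
  (∑ r, E r ⊙ E r) +
    ∑ r, ∑ s ∈ Finset.univ.filter (· < r),
      (2 * ∫ t, Real.cos ((θ r - θ s) * t) ∂μ) • (E r ⊙ E s)

lemma sq_sum_expand {d : ℕ} (f : Fin d → ℝ) :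
    (∑ r, f r) ^ 2 = ∑ r, (f r) ^ 2 +
      2 * ∑ r, ∑ s ∈ Finset.univ.filter (· < r), f r * f s := by
  have key : ∀ r s : Fin d, f r * f s =
      (if s < r then f r * f s else 0) + ((if r = s then f r * f s else 0) +
        (if r < s then f r * f s else 0)) := by
    intro r s
    rcases lt_trichotomy s r with h | h | h
    · simp [h, h.ne, (h.ne : ¬ s = r), not_lt.2 h.le, h.ne']
    · simp [h, lt_irrefl]
    · simp [h, h.ne, h.ne', not_lt.2 h.le]
  have swap : (∑ r, ∑ s, if r < s then f r * f s else 0)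
      = ∑ r, ∑ s, if s < r then f r * f s else 0 := by
    rw [Finset.sum_comm]
    refine Finset.sum_congr rfl fun r _ => Finset.sum_congr rfl fun s _ => ?_
    by_cases h : s < r <;> simp [h, mul_comm]
  calc (∑ r, f r) ^ 2 = ∑ r, ∑ s, f r * f s := by
        rw [sq, Finset.sum_mul_sum]
    _ = ∑ r, ∑ s, ((if s < r then f r * f s else 0) +
          ((if r = s then f r * f s else 0) + (if r < s then f r * f s else 0))) := by
        refine Finset.sum_congr rfl fun r _ => Finset.sum_congr rfl fun s _ => key r s
    _ = (∑ r, ∑ s, if s < r then f r * f s else 0) +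
          ((∑ r, ∑ s, if r = s then f r * f s else 0) +
            (∑ r, ∑ s, if r < s then f r * f s else 0)) := by
        simp [Finset.sum_add_distrib]
    _ = ∑ r, (f r) ^ 2 + 2 * ∑ r, ∑ s ∈ Finset.univ.filter (· < r), f r * f s := by
        rw [swap]
        have hmid : (∑ r, ∑ s, if r = s then f r * f s else 0) = ∑ r, (f r) ^ 2 := by
          refine Finset.sum_congr rfl fun r _ => ?_
          rw [Finset.sum_ite_eq (Finset.univ) r (fun s => f r * f s)]
          simp [sq]
        have hfil : ∀ r : Fin d, (∑ s ∈ Finset.univ.filter (· < r), f r * f s)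
            = ∑ s, if s < r then f r * f s else 0 := fun r => by
          rw [Finset.sum_filter]
        rw [hmid]
        simp only [hfil]
        ring

/-- if a graph `G` on `n` vertices admits uniform average mixing under some
distribution `R`, i.e. `M̂_R = (1/n) J`, then
`(1/n) ∑ r, (m r)² ≤ tr (M̂) ≤ (n+1)/2`, where `m r` are the eigenvalue multiplicities
of the adjacency matrix of `G` and `M̂ = ∑ r, E r ∘ E r`. -/
theorem uniform_average_mixing_trace_bounds {n d : ℕ} (hn : 0 < n)
    (G : SimpleGraph (Fin n)) [DecidableRel G.Adj]
    (θ : Fin d → ℝ) (E : Fin d → Matrix (Fin n) (Fin n) ℝ)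
    (hθ : Function.Injective θ)
    (hA : G.adjMatrix ℝ = ∑ r, θ r • E r)
    (hEsym : ∀ r, (E r).IsSymm)
    (horth : ∀ r s, E r * E s = if r = s then E r else 0)
    (hsum : ∑ r, E r = 1)
    (m : Fin d → ℕ) (hm : ∀ r, (E r).trace = (m r : ℝ))
    (μ : Measure ℝ) [IsProbabilityMeasure μ]
    (huniform : ammR θ E μ = (1 / n : ℝ) • Matrix.of fun _ _ => (1 : ℝ)) :
    (1 / n : ℝ) * ∑ r, (m r : ℝ) ^ 2 ≤ (∑ r, E r ⊙ E r).trace ∧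
      (∑ r, E r ⊙ E r).trace ≤ (n + 1) / 2 := by
  have hn' : (0 : ℝ) < n := Nat.cast_pos.mpr hn
  -- diagonal entries are nonnegative
  have hx0 : ∀ (r : Fin d) (i : Fin n), 0 ≤ E r i i := by
    intro r i
    have h : E r i i = ∑ j, (E r i j) ^ 2 := by
      have h1 : E r * E r = E r := by simpa using horth r r
      conv_lhs => rw [← h1]
      rw [Matrix.mul_apply]
      refine Finset.sum_congr rfl fun j _ => ?_
      rw [(hEsym r).apply i j, sq]
    rw [h]
    positivity
  -- rows of diagonals sum to 1
  have hx1 : ∀ i : Fin n, ∑ r, E r i i = 1 := by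
    intro i
    have := congrFun (congrFun hsum i) i
    simpa [Matrix.sum_apply, Matrix.one_apply_eq] using this
  -- trace of M̂
  have hT : (∑ r, E r ⊙ E r).trace = ∑ r, ∑ i, (E r i i) ^ 2 := by
    rw [Matrix.trace_sum]
    refine Finset.sum_congr rfl fun r _ => ?_
    simp [Matrix.trace, Matrix.diag, Matrix.hadamard_apply, sq]
  constructor
  · -- lower bound, Cauchy–Schwarz
    rw [hT, div_mul_eq_mul_div, one_mul, div_le_iff₀ hn']
    rw [Finset.sum_mul]
    refine Finset.sum_le_sum fun r _ => ?_
    have hmr : (m r : ℝ) = ∑ i, E r i i := by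
      rw [← hm r]; simp [Matrix.trace, Matrix.diag]
    have := sq_sum_le_card_mul_sum_sq (s := (Finset.univ : Finset (Fin n)))
      (f := fun i => E r i i)
    rw [hmr]
    calc (∑ i, E r i i) ^ 2 ≤ (((Finset.univ : Finset (Fin n)).card : ℕ) : ℝ) *
          ∑ i, (E r i i) ^ 2 := this
      _ = (∑ i, (E r i i) ^ 2) * n := by simp [Finset.card_univ, mul_comm]
  · -- upper bound via trace of the uniform mixing identity
    have hc : ∀ r s : Fin d, |∫ t, Real.cos ((θ r - θ s) * t) ∂μ| ≤ 1 := by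
      intro r s
      have := norm_integral_le_of_norm_le_const (μ := μ)
        (f := fun t => Real.cos ((θ r - θ s) * t)) (C := 1)
        (Filter.Eventually.of_forall fun t => by
          simpa [Real.norm_eq_abs] using Real.abs_cos_le_one ((θ r - θ s) * t))
      simpa [Real.norm_eq_abs, measure_univ] using this
    -- trace of hadamard products of distinct idempotents is nonneg
    have hHad : ∀ r s : Fin d, (E r ⊙ E s).trace = ∑ i, E r i i * E s i i := by
      intro r s; simp [Matrix.trace, Matrix.diag, Matrix.hadamard_apply]
    have htr := congrArg Matrix.trace huniform
    have hrhs : ((1 / n : ℝ) • (Matrix.of fun _ _ => (1 : ℝ)) :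
        Matrix (Fin n) (Fin n) ℝ).trace = 1 := by
      simp [Matrix.trace, Matrix.diag, Finset.sum_const, mul_comm]
      field_simp
    rw [hrhs] at htr
    set T : ℝ := (∑ r, E r ⊙ E r).trace with hTdef
    set S : ℝ := ∑ r, ∑ s ∈ Finset.univ.filter (· < r), (E r ⊙ E s).trace with hSdef
    have hlhs : (ammR θ E μ).trace = T +
        ∑ r, ∑ s ∈ Finset.univ.filter (· < r),
          (2 * ∫ t, Real.cos ((θ r - θ s) * t) ∂μ) * (E r ⊙ E s).trace := by
      unfold ammR
      rw [Matrix.trace_add]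
      congr 1
      rw [Matrix.trace_sum]
      refine Finset.sum_congr rfl fun r _ => ?_
      rw [Matrix.trace_sum]
      refine Finset.sum_congr rfl fun s _ => ?_
      rw [Matrix.trace_smul, smul_eq_mul]
    rw [hlhs] at htr
    -- each cross trace is nonneg, coefficients ≥ -2
    have hSnn : ∀ r s : Fin d, 0 ≤ (E r ⊙ E s).trace := by
      intro r s; rw [hHad]
      exact Finset.sum_nonneg fun i _ => mul_nonneg (hx0 r i) (hx0 s i)
    have hge : T - 2 * S ≤ 1 := by
      rw [← htr]
      have : -(2 * S) ≤ ∑ r, ∑ s ∈ Finset.univ.filter (· < r),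
          (2 * ∫ t, Real.cos ((θ r - θ s) * t) ∂μ) * (E r ⊙ E s).trace := by
        rw [hSdef, Finset.mul_sum, ← Finset.sum_neg_distrib]
        refine Finset.sum_le_sum fun r _ => ?_
        rw [Finset.mul_sum, ← Finset.sum_neg_distrib]
        refine Finset.sum_le_sum fun s _ => ?_
        have h1 : (-1 : ℝ) ≤ ∫ t, Real.cos ((θ r - θ s) * t) ∂μ :=
          neg_le_of_abs_le (hc r s)
        nlinarith [hSnn r s]
      linarith
    -- n = T + 2S
    have hnTS : (n : ℝ) = T + 2 * S := by
      have : ∀ i : Fin n, (1 : ℝ) = ∑ r, (E r i i) ^ 2 +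
          2 * ∑ r, ∑ s ∈ Finset.univ.filter (· < r), E r i i * E s i i := by
        intro i
        have := sq_sum_expand (fun r => E r i i)
        rw [hx1 i] at this
        simpa using this
      have hsum' : (n : ℝ) = ∑ i : Fin n, (∑ r, (E r i i) ^ 2 +
          2 * ∑ r, ∑ s ∈ Finset.univ.filter (· < r), E r i i * E s i i) := by
        calc (n : ℝ) = ∑ _i : Fin n, (1 : ℝ) := by simp
          _ = _ := Finset.sum_congr rfl fun i _ => this i
      rw [hsum', Finset.sum_add_distrib]
      congr 1
      · rw [show T = ∑ r, ∑ i, (E r i i) ^ 2 from hT, Finset.sum_comm]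
      · rw [← Finset.mul_sum]
        congr 1
        rw [show S = ∑ r, ∑ s ∈ Finset.univ.filter (· < r), (E r ⊙ E s).trace from hSdef,
          Finset.sum_comm]
        refine Finset.sum_congr rfl fun r _ => ?_
        rw [Finset.sum_comm]
        refine Finset.sum_congr rfl fun s _ => ?_
        rw [hHad]
    linarith
end

section
/- For n ≥ 5, there is no random variable R such that the average mixing matrix of the complete graph K_n equals (1/n)J. -/
open Matrix MeasureTheory
open scoped Matrix

/-!
An off-diagonal entry of `M̂_R` is `2 (1 - E[cos (n R)]) / n²`, so `M̂_R = J / n` forces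
`E[cos (n R)] = 1 - n / 2`, which is below `-1` once `n ≥ 5`.
-/

/-- The all-ones matrix. -/
def allOnes (n : ℕ) : Matrix (Fin n) (Fin n) ℝ := Matrix.of fun _ _ => 1

/-- For `c = E[cos (n R)]` this is the average mixing matrix `M̂_R` of `K_n`. -/
noncomputable def completeGraphAvgMixing (n : ℕ) (c : ℝ) : Matrix (Fin n) (Fin n) ℝ :=
  ((1 / n : ℝ) • allOnes n) ⊙ ((1 / n : ℝ) • allOnes n) +
    (1 - (1 / n : ℝ) • allOnes n) ⊙ (1 - (1 / n : ℝ) • allOnes n) +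
    (2 * c) • (((1 / n : ℝ) • allOnes n) ⊙ (1 - (1 / n : ℝ) • allOnes n))

theorem completeGraphAvgMixing_apply_of_ne {n : ℕ} (c : ℝ) {i j : Fin n} (hij : i ≠ j) :
    completeGraphAvgMixing n c i j = 2 * (1 - c) / n ^ 2 := by
  simp only [completeGraphAvgMixing, Matrix.add_apply, hadamard_apply, Matrix.smul_apply,
    Matrix.sub_apply, one_apply_ne hij, allOnes, of_apply, smul_eq_mul, mul_one]
  ring

theorem eq_of_completeGraphAvgMixing_eq_uniform {n : ℕ} {c : ℝ} (hn : 2 ≤ n)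
    (h : completeGraphAvgMixing n c = (1 / n : ℝ) • allOnes n) : c = 1 - n / 2 := by
  have hentry := congrFun₂ h ⟨0, by omega⟩ ⟨1, by omega⟩
  rw [completeGraphAvgMixing_apply_of_ne c (by simp [Fin.ext_iff])] at hentry
  simp only [Matrix.smul_apply, allOnes, of_apply, smul_eq_mul, mul_one] at hentry
  have hn0 : (n : ℝ) ≠ 0 := by positivity
  field_simp at hentry
  linarith

theorem neg_one_le_integral_cos {α : Type*} [MeasurableSpace α] (μ : Measure α)
    [IsProbabilityMeasure μ] (f : α → ℝ) : -1 ≤ ∫ t, Real.cos (f t) ∂μ := by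
  have hnorm : ‖∫ t, Real.cos (f t) ∂μ‖ ≤ 1 := by
    simpa using norm_integral_le_of_norm_le_const (μ := μ) (f := fun t => Real.cos (f t)) (C := 1)
      (Filter.Eventually.of_forall fun t => by simpa using Real.abs_cos_le_one (f t))
  exact neg_le_of_abs_le hnorm

/-- for `n ≥ 5`, there is no random variable `R` (modelled by its
distribution, a probability measure `μ` on `ℝ`) such that the average mixing matrix of
the complete graph `K_n`, namely
`M̂_R = E₀∘E₀ + E₁∘E₁ + 2 E[cos (n R)] • (E₀∘E₁)` with `E₀ = (1/n) J`, `E₁ = I - E₀`,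
equals `(1/n) J`. -/
theorem no_uniform_average_mixing_completeGraph {n : ℕ} (hn : 5 ≤ n) :
    ¬ ∃ μ : Measure ℝ, IsProbabilityMeasure μ ∧
      ((1 / n : ℝ) • allOnes n) ⊙ ((1 / n : ℝ) • allOnes n) +
          (1 - (1 / n : ℝ) • allOnes n) ⊙ (1 - (1 / n : ℝ) • allOnes n) +
          (2 * ∫ t, Real.cos (n * t) ∂μ) •
            (((1 / n : ℝ) • allOnes n) ⊙ (1 - (1 / n : ℝ) • allOnes n)) =
        (1 / n : ℝ) • allOnes n := by
  rintro ⟨μ, hμ, hM⟩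
  have hc : ∫ t, Real.cos (n * t) ∂μ = 1 - n / 2 :=
    eq_of_completeGraphAvgMixing_eq_uniform (by omega) hM
  have hlower := neg_one_le_integral_cos μ (fun t => n * t)
  have hn' : (5 : ℝ) ≤ n := by exact_mod_cast hn
  linarith
end

section
/- For any graph G and sampling distribution R, tr(M̂_R^{G□G}) ≥ (tr(M̂_R^G))². Consequently, if M̂_R^{G□G} = (1/n²)J for a graph G on n vertices, then tr(M̂^G) ≤ (n+1)/2, where M̂^G is the standard average mixing matrix. -/
open Matrix MeasureTheory
open scoped Matrix Kronecker

noncomputable section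

/-- The (real form of the) mixing matrix `M(t)` of the quantum walk on a graph with
spectral decomposition `A = ∑ r, θ r • E r`:
`M(t) = ∑ r, ∑ s, cos ((θ r - θ s) t) • (E r ∘ E s)`. -/
def mixingReal {n d : ℕ} (θ : Fin d → ℝ) (E : Fin d → Matrix (Fin n) (Fin n) ℝ)
    (t : ℝ) : Matrix (Fin n) (Fin n) ℝ :=
  ∑ r, ∑ s, Real.cos ((θ r - θ s) * t) • (E r ⊙ E s)

/-- The average mixing matrix `M̂_R^G = E[M^G(R)]`. -/
def ammG {n d : ℕ} (θ : Fin d → ℝ) (E : Fin d → Matrix (Fin n) (Fin n) ℝ)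
    (μ : Measure ℝ) : Matrix (Fin n) (Fin n) ℝ :=
  Matrix.of fun i j => ∫ t, mixingReal θ E t i j ∂μ

/-- The average mixing matrix `M̂_R^{G□G} = E[M^G(R) ⊗ M^G(R)]` of the Cartesian square. -/
def ammGG {n d : ℕ} (θ : Fin d → ℝ) (E : Fin d → Matrix (Fin n) (Fin n) ℝ)
    (μ : Measure ℝ) : Matrix (Fin n × Fin n) (Fin n × Fin n) ℝ :=
  Matrix.of fun p q => ∫ t, (mixingReal θ E t ⊗ₖ mixingReal θ E t) p q ∂μ

/-!
Write `f t = tr M(t)`. Since `tr (A ⊗ B) = tr A · tr B`, the two traces are `E[f]` and `E[f²]`,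
so the first claim is `Var f ≥ 0`. If `M̂_R^{G□G} = J / n²` its trace is `1`, hence
`tr M̂_R^G ≤ 1`. On the other hand `tr M̂_R^G = ∑ r s, E[cos ((θ r - θ s) R)] · tr (E r ∘ E s)`:
the weights `tr (E r ∘ E s)` are nonnegative (Schur product of positive semidefinite
idempotents) and sum to `tr (1 ∘ 1) = n`, while the averaged cosines are `1` on the diagonal
and `≥ -1` off it, which gives `tr M̂_R^G ≥ 2 tr M̂^G - n`.
-/

section general

variable {α ι : Type*} [MeasurableSpace α] {μ : Measure α}

lemma Matrix.IsSymm.posSemidef_of_mul_self_eq [Fintype ι] {A : Matrix ι ι ℝ} (hA : A.IsSymm)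
    (h : A * A = A) : A.PosSemidef := by
  have hA' : Aᴴ * A = A := by rw [conjTranspose_eq_transpose_of_trivial, hA.eq, h]
  exact hA' ▸ posSemidef_conjTranspose_mul_self A

lemma Matrix.trace_of_integral [Fintype ι] {A : α → Matrix ι ι ℝ}
    (hA : ∀ i, Integrable (fun t => A t i i) μ) :
    (Matrix.of fun i j => ∫ t, A t i j ∂μ).trace = ∫ t, (A t).trace ∂μ := by
  simp only [trace, diag_apply, of_apply]
  exact (integral_finsetSum _ fun i _ => hA i).symm

lemma sq_integral_le_integral_sq [IsProbabilityMeasure μ] {f : α → ℝ} (hf : MemLp f 2 μ) :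
    (∫ x, f x ∂μ) ^ 2 ≤ ∫ x, f x ^ 2 ∂μ := by
  have hvar := ProbabilityTheory.variance_nonneg f μ
  rw [ProbabilityTheory.variance_eq_sub hf] at hvar
  simpa using hvar

lemma two_mul_sum_diag_sub_sum_le [Fintype ι] {c w : ι → ι → ℝ} (hw : ∀ r s, 0 ≤ w r s)
    (hc_diag : ∀ r, c r r = 1) (hc : ∀ r s, -1 ≤ c r s) :
    2 * ∑ r, w r r - ∑ r, ∑ s, w r s ≤ ∑ r, ∑ s, c r s * w r s := by
  have hrow : ∀ r, 2 * w r r ≤ ∑ s, (c r s + 1) * w r s := fun r => by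
    simpa [hc_diag r, two_mul, add_mul] using
      Finset.single_le_sum (f := fun s => (c r s + 1) * w r s)
        (fun s _ => mul_nonneg (by linarith [hc r s]) (hw r s)) (Finset.mem_univ r)
  have := Finset.sum_le_sum fun r (_ : r ∈ Finset.univ) => hrow r
  simp only [add_mul, one_mul, Finset.sum_add_distrib, ← Finset.mul_sum] at this
  linarith

end general

section cos

variable {μ : Measure ℝ}

lemma integrable_cos_mul [IsFiniteMeasure μ] (a : ℝ) : Integrable (fun t => Real.cos (a * t)) μ :=
  .of_bound (by fun_prop) 1 (ae_of_all _ fun t => by simpa using Real.abs_cos_le_one (a * t))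

lemma neg_one_le_integral_cos_mul [IsProbabilityMeasure μ] (a : ℝ) :
    -1 ≤ ∫ t, Real.cos (a * t) ∂μ := by
  simpa using integral_mono (integrable_const (μ := μ) (-1 : ℝ)) (integrable_cos_mul a)
    fun t => Real.neg_one_le_cos (a * t)

end cos

section mixing

variable {n d : ℕ} (θ : Fin d → ℝ) (E : Fin d → Matrix (Fin n) (Fin n) ℝ) (μ : Measure ℝ)

lemma continuous_mixingReal : Continuous (mixingReal θ E) := by
  unfold mixingReal
  fun_prop

lemma abs_mixingReal_apply_le (t : ℝ) (i j : Fin n) :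
    |mixingReal θ E t i j| ≤ ∑ r, ∑ s, |(E r ⊙ E s) i j| := by
  simp only [mixingReal, Matrix.sum_apply, Matrix.smul_apply, smul_eq_mul]
  refine (Finset.abs_sum_le_sum_abs _ _).trans <| Finset.sum_le_sum fun r _ =>
    (Finset.abs_sum_le_sum_abs _ _).trans <| Finset.sum_le_sum fun s _ => ?_
  rw [abs_mul]
  exact mul_le_of_le_one_left (abs_nonneg _) (Real.abs_cos_le_one _)

lemma memLp_top_mixingReal_apply (i j : Fin n) :
    MemLp (fun t => mixingReal θ E t i j) ⊤ μ :=
  memLp_top_of_bound ((continuous_mixingReal θ E).matrix_elem i j).aestronglyMeasurable _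
    (ae_of_all _ fun t => abs_mixingReal_apply_le θ E t i j)

lemma trace_mixingReal (t : ℝ) :
    (mixingReal θ E t).trace = ∑ r, ∑ s, Real.cos ((θ r - θ s) * t) * (E r ⊙ E s).trace := by
  simp only [mixingReal, trace_sum, trace_smul, smul_eq_mul]

lemma memLp_trace_mixingReal [IsFiniteMeasure μ] (p : ENNReal) :
    MemLp (fun t => (mixingReal θ E t).trace) p μ := by
  refine .of_bound (continuous_mixingReal θ E).matrix_trace.aestronglyMeasurable
    (∑ i, ∑ r, ∑ s, |(E r ⊙ E s) i i|) (ae_of_all _ fun t => ?_)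
  exact (Finset.abs_sum_le_sum_abs _ _).trans
    (Finset.sum_le_sum fun i _ => abs_mixingReal_apply_le θ E t i i)

variable [IsFiniteMeasure μ]

lemma trace_ammG : (ammG θ E μ).trace = ∫ t, (mixingReal θ E t).trace ∂μ :=
  trace_of_integral fun i => (memLp_top_mixingReal_apply θ E μ i i).integrable le_top

lemma trace_ammGG : (ammGG θ E μ).trace = ∫ t, (mixingReal θ E t).trace ^ 2 ∂μ := by
  rw [ammGG, trace_of_integral fun p => ((memLp_top_mixingReal_apply θ E μ p.2 p.2).mul'
    (memLp_top_mixingReal_apply θ E μ p.1 p.1)).integrable le_top]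
  simp only [trace_kronecker, sq]

lemma trace_ammG_eq_sum : (ammG θ E μ).trace =
    ∑ r, ∑ s, (∫ t, Real.cos ((θ r - θ s) * t) ∂μ) * (E r ⊙ E s).trace := by
  simp only [trace_ammG, trace_mixingReal]
  rw [integral_finsetSum _ fun r _ => integrable_finsetSum _ fun s _ =>
    (integrable_cos_mul _).mul_const _]
  refine Finset.sum_congr rfl fun r _ => ?_
  rw [integral_finsetSum _ fun s _ => (integrable_cos_mul _).mul_const _]
  simp only [integral_mul_const]

lemma two_mul_trace_sub_le_trace_ammG [IsProbabilityMeasure μ] (hEsym : ∀ r, (E r).IsSymm)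
    (hidem : ∀ r, E r * E r = E r) (hsum : ∑ r, E r = 1) :
    2 * (∑ r, E r ⊙ E r).trace - n ≤ (ammG θ E μ).trace := by
  have hpsd r := (hEsym r).posSemidef_of_mul_self_eq (hidem r)
  have htotal : ∑ r, ∑ s, (E r ⊙ E s).trace = n := calc
    _ = ((∑ r, E r) ⊙ ∑ s, E s).trace := by
      simp only [← trace_sum]
      congr 1
      ext i j
      simp [hadamard_apply, Matrix.sum_apply, Finset.sum_mul_sum]
    _ = n := by simp [hsum, hadamard_one]
  rw [trace_ammG_eq_sum, trace_sum, ← htotal]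
  exact two_mul_sum_diag_sub_sum_le (fun r s => ((hpsd r).hadamard (hpsd s)).trace_nonneg)
    (fun r => by simp) (fun r s => neg_one_le_integral_cos_mul _)

end mixing

theorem trace_amm_cartesianSquare_general {n d : ℕ}
    (θ : Fin d → ℝ) (E : Fin d → Matrix (Fin n) (Fin n) ℝ)
    (hEsym : ∀ r, (E r).IsSymm)
    (horth : ∀ r s, E r * E s = if r = s then E r else 0)
    (hsum : ∑ r, E r = 1)
    (μ : Measure ℝ) [IsProbabilityMeasure μ] :
    ((ammG θ E μ).trace) ^ 2 ≤ (ammGG θ E μ).trace ∧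
      (ammGG θ E μ = ((1 : ℝ) / (n : ℝ) ^ 2) • (Matrix.of fun _ _ => (1 : ℝ)) →
        (∑ r, E r ⊙ E r).trace ≤ ((n : ℝ) + 1) / 2) := by
  have hsq : (ammG θ E μ).trace ^ 2 ≤ (ammGG θ E μ).trace := by
    rw [trace_ammG, trace_ammGG]
    exact sq_integral_le_integral_sq (memLp_trace_mixingReal θ E μ 2)
  refine ⟨hsq, fun hJ => ?_⟩
  have hGG : (ammGG θ E μ).trace ≤ 1 := by
    rw [hJ, trace_smul]
    simpa [trace, ← sq, ← div_eq_inv_mul] using div_self_le_one ((n : ℝ) ^ 2)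
  have hG : (ammG θ E μ).trace ≤ 1 :=
    le_of_abs_le ((sq_le_one_iff_abs_le_one _).1 (hsq.trans hGG))
  have hlow := two_mul_trace_sub_le_trace_ammG θ E μ hEsym (fun r => by simpa using horth r r) hsum
  linarith

/-- for any graph `G` and sampling distribution `R`,
`tr (M̂_R^{G□G}) ≥ (tr M̂_R^G)²`; consequently, if `M̂_R^{G□G} = (1/n²) J`, then
`tr (M̂^G) ≤ (n+1)/2`, where `M̂^G = ∑ r, E r ∘ E r` is the standard average
mixing matrix of `G`. -/
theorem trace_amm_cartesianSquare {n d : ℕ}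
    (G : SimpleGraph (Fin n)) [DecidableRel G.Adj]
    (θ : Fin d → ℝ) (E : Fin d → Matrix (Fin n) (Fin n) ℝ)
    (hθ : Function.Injective θ)
    (hA : G.adjMatrix ℝ = ∑ r, θ r • E r)
    (hEsym : ∀ r, (E r).IsSymm)
    (horth : ∀ r s, E r * E s = if r = s then E r else 0)
    (hsum : ∑ r, E r = 1)
    (μ : Measure ℝ) [IsProbabilityMeasure μ] :
    ((ammG θ E μ).trace) ^ 2 ≤ (ammGG θ E μ).trace ∧
      (ammGG θ E μ = ((1 : ℝ) / (n : ℝ) ^ 2) • (Matrix.of fun _ _ => (1 : ℝ)) →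
        (∑ r, E r ⊙ E r).trace ≤ ((n : ℝ) + 1) / 2) :=
  trace_amm_cartesianSquare_general θ E hEsym horth hsum μ

end
end
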